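/- Let (δ_n) ⊂ (0, 1/2) with δ_n → 0 and let (x_n) ⊂ ℝ be a sequence converging to x₀ ∈ {0, 1}. Then Φ_{δ_n}(x_n) → +∞ as n → ∞. -/

import Mathlib

open Filter

/-- The degenerate mobility `M(φ) = φ²(1-φ)²`. -/
noncomputable def M (φ : ℝ) : ℝ := φ ^ 2 * (1 - φ) ^ 2

/-- The truncated (nondegenerate) mobility `M_δ`. -/
noncomputable def Md (δ φ : ℝ) : ℝ :=
  if φ ≤ δ then M δ else if φ ≤ 1 - δ then M φ else M (1 - δ)

/-- The entropy density with cutoff `Φ_δ(φ) = ∫_{1/2}^{φ} ∫_{1/2}^{s} dr ds / M_δ(r)`. -/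
noncomputable def Phid (δ φ : ℝ) : ℝ :=
  ∫ s in (1 / 2 : ℝ)..φ, ∫ r in (1 / 2 : ℝ)..s, 1 / Md δ r

/-! `Φ_δ` is symmetric under `φ ↦ 1 - φ`, so only `x₀ = 0` needs treatment. For `x ≤ 1/2` put
`m = max x δ`; then `Φ_δ(x) = ∫_x^{1/2} ∫_s^{1/2} dr ds / M_δ(r)` has a nonnegative inner integral,
and `M_δ(r) ≤ r²` for `r ≥ δ`, so `Φ_δ(x) ≥ ∫_m^{1/2} (1/s - 2) ds ≥ -log m - 2`. Since `m → 0⁺`,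
the bound tends to `+∞`. -/

open intervalIntegral

lemma M_one_sub (r : ℝ) : M (1 - r) = M r := by unfold M; ring

lemma M_pos {r : ℝ} (h0 : 0 < r) (h1 : r < 1) : 0 < M r := by
  have : 0 < 1 - r := by linarith
  unfold M; positivity

lemma M_le_sq {r : ℝ} (h0 : 0 ≤ r) (h2 : r ≤ 2) : M r ≤ r ^ 2 := by
  unfold M
  exact mul_le_of_le_one_right (sq_nonneg r) (by nlinarith)

lemma Md_one_sub (δ r : ℝ) : Md δ (1 - r) = Md δ r := by
  unfold Md
  have M_eq : ∀ a b : ℝ, a = b ∨ a = 1 - b → M a = M b := by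
    rintro a b (rfl | rfl)
    exacts [rfl, M_one_sub b]
  split_ifs <;> apply M_eq <;> first | (left; linarith) | (right; linarith)

lemma continuous_Md (δ : ℝ) : Continuous (Md δ) := by
  have hM : Continuous M := by unfold M; fun_prop
  refine Continuous.if_le continuous_const
    (Continuous.if_le hM continuous_const continuous_id continuous_const fun r hr => by rw [hr])
    continuous_id continuous_const fun r hr => ?_
  rw [hr]
  split_ifs
  · rfl
  · exact (M_one_sub δ).symm

lemma Md_pos {δ : ℝ} (h0 : 0 < δ) (h1 : δ < 1 / 2) (r : ℝ) : 0 < Md δ r := by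
  unfold Md
  split_ifs <;> exact M_pos (by linarith) (by linarith)

lemma Md_le_sq {δ r : ℝ} (h0 : 0 ≤ δ) (h1 : δ ≤ 1) (hr : δ ≤ r) : Md δ r ≤ r ^ 2 := by
  unfold Md
  split_ifs with h2 h3
  · rw [le_antisymm h2 hr]
    exact M_le_sq h0 (by linarith)
  · exact M_le_sq (by linarith) (by linarith)
  · calc M (1 - δ) ≤ (1 - δ) ^ 2 := M_le_sq (by linarith) (by linarith)
      _ ≤ r ^ 2 := by nlinarith

lemma continuous_one_div_Md {δ : ℝ} (h0 : 0 < δ) (h1 : δ < 1 / 2) :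
    Continuous fun r => 1 / Md δ r :=
  continuous_const.div (continuous_Md δ) fun r => (Md_pos h0 h1 r).ne'

lemma integral_comp_two_mul_sub (g : ℝ → ℝ) (c s : ℝ) :
    ∫ r in c..s, g (2 * c - r) = -∫ r in c..(2 * c - s), g r := by
  rw [integral_comp_sub_left, show 2 * c - c = c by ring, integral_symm]

lemma integral_integral_two_mul_sub_of_symm {g : ℝ → ℝ} {c : ℝ} (hg : ∀ r, g (2 * c - r) = g r)
    (x : ℝ) :
    ∫ s in c..(2 * c - x), ∫ r in c..s, g r = ∫ s in c..x, ∫ r in c..s, g r := by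
  have primitive_two_mul_sub (s : ℝ) : ∫ r in c..(2 * c - s), g r = -∫ r in c..s, g r := by
    have := integral_comp_two_mul_sub g c s
    simp only [hg] at this
    linarith
  have := integral_comp_two_mul_sub (fun s => ∫ r in c..s, g r) c x
  simp only [primitive_two_mul_sub, integral_neg] at this
  linarith

lemma integral_integral_symm (g : ℝ → ℝ) (c x : ℝ) :
    ∫ s in c..x, ∫ r in c..s, g r = ∫ s in x..c, ∫ r in s..c, g r := by
  simp only [integral_symm _ c, integral_neg, neg_neg]

lemma Phid_one_sub (δ φ : ℝ) : Phid δ (1 - φ) = Phid δ φ := by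
  simpa only [Phid, show (2 : ℝ) * (1 / 2) = 1 by norm_num] using
    integral_integral_two_mul_sub_of_symm (g := fun r => 1 / Md δ r) (c := 1 / 2)
      (fun r => by norm_num [Md_one_sub]) φ

lemma one_div_sub_two_le_integral_one_div_Md {δ s : ℝ} (h0 : 0 < δ) (h1 : δ < 1 / 2)
    (hs : δ ≤ s) (hs2 : s ≤ 1 / 2) : 1 / s - 2 ≤ ∫ r in s..(1 / 2), 1 / Md δ r := by
  have hs0 : 0 < s := h0.trans_le hs
  calc 1 / s - 2 = ∫ r in s..(1 / 2), r ^ (-2 : ℤ) := by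
        rw [integral_zpow (Or.inr ⟨by norm_num, Set.notMem_uIcc_of_lt hs0 (by norm_num)⟩)]
        norm_num
        ring
    _ ≤ ∫ r in s..(1 / 2), 1 / Md δ r := by
        refine integral_mono_on hs2 ?_ ?_ fun r hr => ?_
        · exact (continuousOn_id.zpow₀ _ fun r hr =>
            Or.inl (hs0.trans_le (Set.uIcc_of_le hs2 ▸ hr).1).ne').intervalIntegrable
        · exact (continuous_one_div_Md h0 h1).intervalIntegrable _ _
        · rw [zpow_neg, zpow_two, ← sq, ← one_div]
          exact one_div_le_one_div_of_le (Md_pos h0 h1 r) (Md_le_sq h0.le (by linarith)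
            (hs.trans hr.1))

lemma neg_log_sub_two_le_Phid {δ x : ℝ} (h0 : 0 < δ) (h1 : δ < 1 / 2) (hx : x ≤ 1 / 2) :
    -Real.log (max x δ) - 2 ≤ Phid δ x := by
  set m := max x δ
  have hm0 : 0 < m := h0.trans_le (le_max_right x δ)
  have hm2 : m ≤ 1 / 2 := max_le hx h1.le
  have hcont : Continuous fun s => ∫ r in s..(1 / 2), 1 / Md δ r := by
    simp_rw [integral_symm (1 / 2 : ℝ)]
    exact (continuous_primitive
      (fun a b => (continuous_one_div_Md h0 h1).intervalIntegrable a b) _).neg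
  have hinv : IntervalIntegrable (fun s : ℝ => 1 / s) MeasureTheory.volume m (1 / 2) :=
    (continuousOn_const.div continuousOn_id fun s hs =>
      (hm0.trans_le (Set.uIcc_of_le hm2 ▸ hs).1).ne').intervalIntegrable
  calc -Real.log m - 2 ≤ -Real.log 2 - Real.log m - (1 - 2 * m) := by
        linarith [Real.log_two_lt_d9]
    _ = ∫ s in m..(1 / 2), (1 / s - 2) := by
        rw [integral_sub hinv intervalIntegrable_const,
          integral_one_div (Set.notMem_uIcc_of_lt hm0 (by norm_num)),
          Real.log_div (by norm_num) hm0.ne', one_div, Real.log_inv]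
        simp only [integral_const, smul_eq_mul]
        ring
    _ ≤ ∫ s in m..(1 / 2), ∫ r in s..(1 / 2), 1 / Md δ r :=
        integral_mono_on hm2 (hinv.sub intervalIntegrable_const)
          (hcont.intervalIntegrable _ _) fun s hs =>
          one_div_sub_two_le_integral_one_div_Md h0 h1 ((le_max_right x δ).trans hs.1) hs.2
    _ ≤ ∫ s in x..(1 / 2), ∫ r in s..(1 / 2), 1 / Md δ r := by
        refine integral_mono_interval (le_max_left x δ) hm2 le_rfl ?_
          (hcont.intervalIntegrable _ _)
        refine (MeasureTheory.ae_restrict_iff' measurableSet_Ioc).mpr (.of_forall fun s hs => ?_)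
        exact integral_nonneg hs.2 fun r _ => (one_div_pos.mpr (Md_pos h0 h1 r)).le
    _ = Phid δ x := (integral_integral_symm _ _ x).symm

lemma tendsto_Phid_atTop_of_tendsto_zero {δ x : ℕ → ℝ} (hδ : ∀ n, δ n ∈ Set.Ioo (0 : ℝ) (1 / 2))
    (hδ0 : Tendsto δ atTop (nhds 0)) (hx : Tendsto x atTop (nhds 0)) :
    Tendsto (fun n => Phid (δ n) (x n)) atTop atTop := by
  have hm : Tendsto (fun n => max (x n) (δ n)) atTop (nhdsWithin 0 (Set.Ioi 0)) :=
    tendsto_nhdsWithin_iff.mpr ⟨by simpa using hx.max hδ0,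
      .of_forall fun n => lt_max_of_lt_right (hδ n).1⟩
  have hlog : Tendsto (fun n => -Real.log (max (x n) (δ n)) - 2) atTop atTop :=
    tendsto_atTop_add_const_right _ _
      (tendsto_neg_atBot_atTop.comp (Real.tendsto_log_nhdsGT_zero.comp hm))
  refine tendsto_atTop_mono' _ ?_ hlog
  filter_upwards [hx.eventually_le_const (by norm_num : (0 : ℝ) < 1 / 2)] with n hn
  exact neg_log_sub_two_le_Phid (hδ n).1 (hδ n).2 hn

/-- If `δ_n → 0` and `x_n → x₀ ∈ {0,1}`, then `Φ_{δ_n}(x_n) → +∞`. -/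
theorem entropy_cutoff_blow_up (δ : ℕ → ℝ) (hδ : ∀ n, δ n ∈ Set.Ioo (0 : ℝ) (1 / 2))
    (hδ0 : Tendsto δ atTop (nhds 0)) (x : ℕ → ℝ) (x₀ : ℝ) (hx₀ : x₀ = 0 ∨ x₀ = 1)
    (hx : Tendsto x atTop (nhds x₀)) :
    Tendsto (fun n => Phid (δ n) (x n)) atTop atTop := by
  rcases hx₀ with rfl | rfl
  · exact tendsto_Phid_atTop_of_tendsto_zero hδ hδ0 hx
  · have h1x : Tendsto (fun n => 1 - x n) atTop (nhds 0) := by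
      simpa using (tendsto_const_nhds (x := (1 : ℝ))).sub hx
    simpa only [Phid_one_sub] using tendsto_Phid_atTop_of_tendsto_zero hδ hδ0 h1x
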